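/- Let U ⊆ ℂ be open with (x+1)·x·(x²+3x+3) ≠ 0 and (x+1)³ ≠ 1 for all x ∈ U, and define s(x) := 1 − 2/(x+1)³. Let V ⊆ ℂ be open with s(U) ⊆ V, and let Y : ℂ → ℂ be twice differentiable on V satisfying Legendre's equation with ν = −1/3, μ = 0: (1 − s²)·Y''(s) − 2s·Y'(s) − (2/9)·Y(s) = 0 for all s ∈ V. Let g : ℂ → ℂ be twice differentiable on U with g(x)² = (x+1)³ − 1 for all x ∈ U. Then ψ(x) := (g(x)/(x+1))·Y(s(x)) solves ψ'' = Q₂·ψ on U. -/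

import Mathlib

open Complex

/-- `f` solves the equation `ψ'' = Q·ψ` on the open set `U`. -/
def SolvesOn (Q f : ℂ → ℂ) (U : Set ℂ) : Prop :=
  (∀ x ∈ U, DifferentiableAt ℂ f x) ∧ (∀ x ∈ U, DifferentiableAt ℂ (deriv f) x) ∧
    ∀ x ∈ U, deriv (deriv f) x = Q x * f x

/-- The coefficient of the normal form (2') of the second Chudnovsky equation. -/
noncomputable def Q₂ (x : ℂ) : ℂ :=
  -(1 / 4) * ((x + 1) * (x + 3) * (x ^ 2 + 3)) / (x ^ 2 * (x ^ 2 + 3 * x + 3) ^ 2)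

/-!
For `ψ = u · (Y ∘ s)` the chain rule gives
`ψ'' = u'' Y(s) + (2 u' s' + u s'') Y'(s) + u s'² Y''(s)`.
Take `u = g / (x + 1)` and `s = 1 - 2 / (x + 1)³`. Differentiating `g² = (x + 1)³ - 1` gives
`g' = 3 (x + 1)² / (2 g)`, so `u'` and `u''` are explicit in `g`; moreover
`1 - s² = 4 g² / (x + 1)⁶`, so Legendre's equation rewrites `u s'² Y''(s)` as
`9 / (g (x + 1)³) · (2 s Y'(s) + (2/9) Y(s))`. After this substitution the `Y'(s)`-terms cancel
and the coefficient of `Y(s)` is `Q₂ · u`.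
-/

open Filter Topology

section SecondDerivative

variable {𝕜 : Type*} [NontriviallyNormedField 𝕜]

theorem hasDerivAt_const_div_add_pow (c a : 𝕜) (n : ℕ) {x : 𝕜} (hx : x + a ≠ 0) :
    HasDerivAt (fun y => c / (y + a) ^ n) (-(n * c) / (x + a) ^ (n + 1)) x := by
  refine ((hasDerivAt_const x c).div (((hasDerivAt_id' x).add_const a).pow n)
    (pow_ne_zero n hx)).congr_deriv ?_
  rcases n with _ | n
  · simp
  · simp only [Pi.pow_apply, Nat.add_sub_cancel]
    field_simp
    ring

theorem hasDerivAt_of_sq_eventuallyEq [NeZero (2 : 𝕜)] {g h : 𝕜 → 𝕜} {h' x : 𝕜}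
    (hg : DifferentiableAt 𝕜 g x) (hgx : g x ≠ 0) (hgh : (fun y => g y ^ 2) =ᶠ[𝓝 x] h)
    (hh : HasDerivAt h h' x) : HasDerivAt g (h' / (2 * g x)) x := by
  have hsq : HasDerivAt (fun y => g y ^ 2) (2 * g x * deriv g x) x :=
    (hg.hasDerivAt.pow 2).congr_deriv (by norm_num)
  rw [← hsq.unique (hh.congr_of_eventuallyEq hgh),
    mul_div_cancel_left₀ _ (mul_ne_zero two_ne_zero hgx)]
  exact hg.hasDerivAt

theorem hasDerivAt_mul_comp {u s Y : 𝕜 → 𝕜} {u' s' x : 𝕜} (hu : HasDerivAt u u' x)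
    (hs : HasDerivAt s s' x) (hY : DifferentiableAt 𝕜 Y (s x)) :
    HasDerivAt (fun y => u y * Y (s y)) (u' * Y (s x) + u x * (deriv Y (s x) * s')) x :=
  hu.mul (hY.hasDerivAt.comp x hs)

theorem hasDerivAt_deriv_mul_comp {u u' s s' Y : 𝕜 → 𝕜} {u'' s'' x : 𝕜}
    (hu : ∀ᶠ y in 𝓝 x, HasDerivAt u (u' y) y) (hu' : HasDerivAt u' u'' x)
    (hs : ∀ᶠ y in 𝓝 x, HasDerivAt s (s' y) y) (hs' : HasDerivAt s' s'' x)
    (hY : ∀ᶠ y in 𝓝 x, DifferentiableAt 𝕜 Y (s y)) (hY' : DifferentiableAt 𝕜 (deriv Y) (s x)) :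
    HasDerivAt (deriv fun y => u y * Y (s y))
      (u'' * Y (s x) + (2 * u' x * s' x + u x * s'') * deriv Y (s x)
        + u x * s' x ^ 2 * deriv (deriv Y) (s x)) x := by
  have hderiv : (deriv fun y => u y * Y (s y)) =ᶠ[𝓝 x]
      fun y => u' y * Y (s y) + u y * (deriv Y (s y) * s' y) := by
    filter_upwards [hu, hs, hY] with y huy hsy hYy
    exact (hasDerivAt_mul_comp huy hsy hYy).deriv
  have hsx := hs.self_of_nhds
  refine HasDerivAt.congr_of_eventuallyEq ?_ hderiv
  refine ((hasDerivAt_mul_comp hu' hsx hY.self_of_nhds).add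
    (hu.self_of_nhds.mul ((hY'.hasDerivAt.comp x hsx).mul hs'))).congr_deriv ?_
  simp only [Function.comp_apply, Pi.mul_apply]
  ring

end SecondDerivative

theorem solvesOn_mul_comp {U : Set ℂ} (hU : IsOpen U) {Q u u' u'' s s' s'' Y : ℂ → ℂ}
    (hu : ∀ x ∈ U, HasDerivAt u (u' x) x) (hu' : ∀ x ∈ U, HasDerivAt u' (u'' x) x)
    (hs : ∀ x ∈ U, HasDerivAt s (s' x) x) (hs' : ∀ x ∈ U, HasDerivAt s' (s'' x) x)
    (hY : ∀ x ∈ U, DifferentiableAt ℂ Y (s x))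
    (hY' : ∀ x ∈ U, DifferentiableAt ℂ (deriv Y) (s x))
    (hQ : ∀ x ∈ U, u'' x * Y (s x) + (2 * u' x * s' x + u x * s'' x) * deriv Y (s x)
      + u x * s' x ^ 2 * deriv (deriv Y) (s x) = Q x * (u x * Y (s x))) :
    SolvesOn Q (fun x => u x * Y (s x)) U := by
  have hnhds {P : ℂ → Prop} (hP : ∀ y ∈ U, P y) {x : ℂ} (hx : x ∈ U) : ∀ᶠ y in 𝓝 x, P y :=
    eventually_of_mem (hU.mem_nhds hx) hP
  have h2 : ∀ x ∈ U, HasDerivAt (deriv fun y => u y * Y (s y)) _ x := fun x hx =>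
    hasDerivAt_deriv_mul_comp (hnhds hu hx) (hu' x hx) (hnhds hs hx) (hs' x hx) (hnhds hY hx)
      (hY' x hx)
  exact ⟨fun x hx => (hasDerivAt_mul_comp (hu x hx) (hs x hx) (hY x hx)).differentiableAt,
    fun x hx => (h2 x hx).differentiableAt, fun x hx => (h2 x hx).deriv.trans (hQ x hx)⟩

theorem Q₂_eq (x : ℂ) :
    Q₂ x = -((x + 1) * ((x + 1) ^ 3 + 8)) / (4 * ((x + 1) ^ 3 - 1) ^ 2) := by
  rw [Q₂, show (x + 1) * (x + 3) * (x ^ 2 + 3) = (x + 1) * ((x + 1) ^ 3 + 8) by ring,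
    show x ^ 2 * (x ^ 2 + 3 * x + 3) ^ 2 = ((x + 1) ^ 3 - 1) ^ 2 by ring, mul_comm 4, ← div_div]
  ring

section ChudnovskyTwo

variable {g : ℂ → ℂ} {x : ℂ}

theorem hasDerivAt_legendreArg (hx : x + 1 ≠ 0) :
    HasDerivAt (fun y : ℂ => 1 - 2 / (y + 1) ^ 3) (6 / (x + 1) ^ 4) x :=
  ((hasDerivAt_const_div_add_pow 2 1 3 hx).const_sub 1).congr_deriv (by push_cast; ring)

theorem hasDerivAt_six_div_pow_four (hx : x + 1 ≠ 0) :
    HasDerivAt (fun y : ℂ => 6 / (y + 1) ^ 4) (-24 / (x + 1) ^ 5) x :=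
  (hasDerivAt_const_div_add_pow 6 1 4 hx).congr_deriv (by norm_num)

theorem hasDerivAt_of_sq_eq_cube_sub_one (hg : DifferentiableAt ℂ g x) (hgx : g x ≠ 0)
    (hgsq : ∀ᶠ y in 𝓝 x, g y ^ 2 = (y + 1) ^ 3 - 1) :
    HasDerivAt g (3 * (x + 1) ^ 2 / (2 * g x)) x :=
  hasDerivAt_of_sq_eventuallyEq hg hgx hgsq
    ((((hasDerivAt_id' x).add_const 1).pow 3).sub_const 1 |>.congr_deriv (by simp))

theorem hasDerivAt_div_add_one (hg : HasDerivAt g (3 * (x + 1) ^ 2 / (2 * g x)) x)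
    (hx : x + 1 ≠ 0) :
    HasDerivAt (fun y => g y / (y + 1)) (3 * (x + 1) / (2 * g x) - g x / (x + 1) ^ 2) x :=
  (hg.div ((hasDerivAt_id' x).add_const 1) hx).congr_deriv (by field_simp)

theorem hasDerivAt_div_add_one_deriv (hg : HasDerivAt g (3 * (x + 1) ^ 2 / (2 * g x)) x)
    (hgx : g x ≠ 0) (hx : x + 1 ≠ 0) :
    HasDerivAt (fun y => 3 * (y + 1) / (2 * g y) - g y / (y + 1) ^ 2)
      (-9 * (x + 1) ^ 3 / (4 * g x ^ 3) + 2 * g x / (x + 1) ^ 3) x :=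
  ((((hasDerivAt_id' x).add_const 1).const_mul 3).div (hg.const_mul 2)
    (mul_ne_zero two_ne_zero hgx)).sub
    (hg.div (((hasDerivAt_id' x).add_const 1).pow 2) (pow_ne_zero 2 hx)) |>.congr_deriv
    (by simp only [Pi.pow_apply]; field_simp; ring)

theorem legendre_transform_eq_Q₂_mul {t Y₀ Y₁ Y₂ : ℂ} (hx : x + 1 ≠ 0) (ht0 : t ≠ 0)
    (ht : t ^ 2 = (x + 1) ^ 3 - 1)
    (hode : (1 - (1 - 2 / (x + 1) ^ 3) ^ 2) * Y₂ - 2 * (1 - 2 / (x + 1) ^ 3) * Y₁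
      - 2 / 9 * Y₀ = 0) :
    (-9 * (x + 1) ^ 3 / (4 * t ^ 3) + 2 * t / (x + 1) ^ 3) * Y₀
      + (2 * (3 * (x + 1) / (2 * t) - t / (x + 1) ^ 2) * (6 / (x + 1) ^ 4)
        + t / (x + 1) * (-24 / (x + 1) ^ 5)) * Y₁
      + t / (x + 1) * (6 / (x + 1) ^ 4) ^ 2 * Y₂ = Q₂ x * (t / (x + 1) * Y₀) := by
  rw [Q₂_eq]
  generalize x + 1 = w at *
  have h1s : 1 - (1 - 2 / w ^ 3) ^ 2 = 4 * t ^ 2 / w ^ 6 := by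
    rw [ht]; field_simp; ring
  have hY₂ : t / w * (6 / w ^ 4) ^ 2 * Y₂
      = 9 / (t * w ^ 3) * (2 * (1 - 2 / w ^ 3) * Y₁ + 2 / 9 * Y₀) :=
    calc t / w * (6 / w ^ 4) ^ 2 * Y₂ = 9 / (t * w ^ 3) * ((1 - (1 - 2 / w ^ 3) ^ 2) * Y₂) := by
          rw [h1s]; field_simp; ring
      _ = _ := by linear_combination 9 / (t * w ^ 3) * hode
  have hcoeff₁ : 2 * (3 * w / (2 * t) - t / w ^ 2) * (6 / w ^ 4) + t / w * (-24 / w ^ 5)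
      + 9 / (t * w ^ 3) * (2 * (1 - 2 / w ^ 3)) = 0 := by
    field_simp
    linear_combination -36 * ht
  have hcoeff₀ : -9 * w ^ 3 / (4 * t ^ 3) + 2 * t / w ^ 3 + 9 / (t * w ^ 3) * (2 / 9)
      = -(w * (w ^ 3 + 8)) / (4 * (w ^ 3 - 1) ^ 2) * (t / w) := by
    rw [← ht]
    field_simp
    linear_combination 8 * (t ^ 2 + w ^ 3) * ht
  linear_combination hY₂ + Y₁ * hcoeff₁ + Y₀ * hcoeff₀

end ChudnovskyTwo

theorem chudnovsky_two_legendre_integrability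
    (U V : Set ℂ) (hU : IsOpen U)
    (hUne : ∀ x ∈ U, (x + 1) * x * (x ^ 2 + 3 * x + 3) ≠ 0)
    (hUne' : ∀ x ∈ U, (x + 1) ^ 3 ≠ 1)
    (hsV : ∀ x ∈ U, 1 - 2 / (x + 1) ^ 3 ∈ V)
    (Y g : ℂ → ℂ)
    (hY1 : ∀ s ∈ V, DifferentiableAt ℂ Y s)
    (hY2 : ∀ s ∈ V, DifferentiableAt ℂ (deriv Y) s)
    (hYode : ∀ s ∈ V, (1 - s ^ 2) * deriv (deriv Y) s - 2 * s * deriv Y s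
      - (2 / 9) * Y s = 0)
    (hg1 : ∀ x ∈ U, DifferentiableAt ℂ g x)
    (hgsq : ∀ x ∈ U, g x ^ 2 = (x + 1) ^ 3 - 1) :
    SolvesOn Q₂ (fun x => g x / (x + 1) * Y (1 - 2 / (x + 1) ^ 3)) U := by
  have hx1 : ∀ x ∈ U, x + 1 ≠ 0 := fun x hx h => hUne x hx (by rw [h, zero_mul, zero_mul])
  have hgx : ∀ x ∈ U, g x ≠ 0 := fun x hx h =>
    hUne' x hx (by linear_combination g x * h - hgsq x hx)
  have hg : ∀ x ∈ U, HasDerivAt g (3 * (x + 1) ^ 2 / (2 * g x)) x := fun x hx =>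
    hasDerivAt_of_sq_eq_cube_sub_one (hg1 x hx) (hgx x hx)
      (eventually_of_mem (hU.mem_nhds hx) hgsq)
  exact solvesOn_mul_comp hU
    (fun x hx => hasDerivAt_div_add_one (hg x hx) (hx1 x hx))
    (fun x hx => hasDerivAt_div_add_one_deriv (hg x hx) (hgx x hx) (hx1 x hx))
    (fun x hx => hasDerivAt_legendreArg (hx1 x hx))
    (fun x hx => hasDerivAt_six_div_pow_four (hx1 x hx))
    (fun x hx => hY1 _ (hsV x hx)) (fun x hx => hY2 _ (hsV x hx))
    (fun x hx => legendre_transform_eq_Q₂_mul (hx1 x hx) (hgx x hx) (hgsq x hx)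
      (hYode _ (hsV x hx)))
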